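/- For every bargraph G, the number of occurrences of the factor UH in G equals 1 plus the number of occurrences of the factor HU, and the number of occurrences of the factor HD equals 1 plus the number of occurrences of the factor DH. -/

import Mathlib

/-- Steps of bargraphs / Motzkin paths. -/
inductive Step where
  | U : Step
  | H : Step
  | D : Step
deriving DecidableEq

/-- Vertical displacement of a step. -/
def Step.val : Step → ℤ
  | .U => 1
  | .H => 0
  | .D => -1

/-- Mirror of a step (swap U and D). -/
def Step.mirror : Step → Step
  | .U => .D
  | .H => .H
  | .D => .U

/-- Final height of a word. -/
def hgt (w : List Step) : ℤ := (w.map Step.val).sum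

/-- A Motzkin path prefix: never goes below the x-axis. -/
def IsMotzkinPrefix (w : List Step) : Prop := ∀ p : List Step, p <+: w → 0 ≤ hgt p

/-- A Motzkin path: never below the x-axis, ends at height 0. -/
def IsMotzkin (w : List Step) : Prop := IsMotzkinPrefix w ∧ hgt w = 0

/-- No peak `UD` and no valley `DU`. -/
def Cornerless (w : List Step) : Prop :=
  ¬ [Step.U, Step.D] <:+: w ∧ ¬ [Step.D, Step.U] <:+: w

/-- A bargraph: starts at the origin, ends on the x-axis, stays strictly above the
x-axis except at the endpoints, and has no factor `UD` or `DU`. -/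
def IsBargraph (w : List Step) : Prop :=
  2 ≤ w.length ∧ hgt w = 0 ∧
    (∀ p : List Step, p <+: w → p ≠ [] → p ≠ w → 0 < hgt p) ∧ Cornerless w

/-- Semiperimeter: number of `U` steps plus number of `H` steps. -/
def semi (w : List Step) : ℕ := w.count Step.U + w.count Step.H

/-- Length of the initial run of `U` steps. -/
def leadU : List Step → ℕ
  | Step.U :: rest => leadU rest + 1
  | _ => 0

/-- Length of the initial run of `H` steps. -/
def leadH : List Step → ℕ
  | Step.H :: rest => leadH rest + 1
  | _ => 0

/-- Length of the initial run of `D` steps. -/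
def leadD : List Step → ℕ
  | Step.D :: rest => leadD rest + 1
  | _ => 0

/-- Length of the first maximal run of `D` steps (0 if none). -/
def firstDescLen : List Step → ℕ
  | [] => 0
  | Step.D :: rest => leadD rest + 1
  | _ :: rest => firstDescLen rest

/-- Number of occurrences of the two-letter factor `a b`. -/
def cnt2 (a b : Step) : List Step → ℕ
  | x :: y :: rest => (if x = a ∧ y = b then 1 else 0) + cnt2 a b (y :: rest)
  | _ => 0

/-- Heights of the columns (`H` steps), starting from a given height. -/
def colHeights : ℤ → List Step → List ℤ
  | _, [] => []
  | h, Step.U :: rest => colHeights (h + 1) rest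
  | h, Step.H :: rest => h :: colHeights h rest
  | h, Step.D :: rest => colHeights (h - 1) rest

/-- Width of the leftmost maximal horizontal segment (0 if none). -/
def lhsW : List Step → ℕ
  | [] => 0
  | Step.H :: rest => leadH rest + 1
  | _ :: rest => lhsW rest

/-- Delete `h` steps at the start of the leftmost horizontal segment. -/
def stripLeadH (h : ℕ) : List Step → List Step
  | [] => []
  | Step.H :: rest => List.drop h (Step.H :: rest)
  | s :: rest => s :: stripLeadH h rest

/-- Number of initial columns of height 1: largest `j` such that the word begins `U H^j`. -/
def iuc : List Step → ℕ
  | Step.U :: rest => leadH rest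
  | _ => 0

/-- Number of maximal horizontal segments. -/
def hsCount : List Step → ℕ
  | [] => 0
  | [Step.H] => 1
  | [_] => 0
  | a :: b :: rest => (if a = Step.H ∧ b ≠ Step.H then 1 else 0) + hsCount (b :: rest)

/-- Mirror image: reverse the word and swap `U` with `D`. -/
def mir (w : List Step) : List Step := (w.reverse).map Step.mirror

/-- Shape of strictly alternating bargraphs:
`U^{i₁} H D^{k₁} H U^{i₂} H D^{k₂} H ⋯ U^{iₘ} H D^{kₘ}` with all `iᵣ, kᵣ ≥ 1`. -/
inductive SAShape : List Step → Prop where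
  | base (i k : ℕ) : 1 ≤ i → 1 ≤ k →
      SAShape (List.replicate i Step.U ++ [Step.H] ++ List.replicate k Step.D)
  | cons (i k : ℕ) (w : List Step) : 1 ≤ i → 1 ≤ k → SAShape w →
      SAShape (List.replicate i Step.U ++ [Step.H] ++ List.replicate k Step.D ++ [Step.H] ++ w)

/-- A strictly alternating bargraph. -/
def IsStrictAlt (w : List Step) : Prop := IsBargraph w ∧ SAShape w

/-- A secondary structure on `{0, …, m-1}`: all consecutive edges are present, every
vertex has at most one non-consecutive neighbour, and there are no crossing edges. -/
def IsSecondaryStructure {m : ℕ} (G : SimpleGraph (Fin m)) : Prop :=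
  (∀ i j : Fin m, (i : ℕ) + 1 = (j : ℕ) → G.Adj i j) ∧
  (∀ i j k : Fin m, G.Adj i j → G.Adj i k →
      (i : ℕ) + 1 ≠ (j : ℕ) → (j : ℕ) + 1 ≠ (i : ℕ) →
      (i : ℕ) + 1 ≠ (k : ℕ) → (k : ℕ) + 1 ≠ (i : ℕ) → j = k) ∧
  ¬ ∃ i j k l : Fin m, (i : ℕ) < (j : ℕ) ∧ (j : ℕ) < (k : ℕ) ∧ (k : ℕ) < (l : ℕ) ∧
      G.Adj i k ∧ G.Adj j l

/-- Generating function of bargraphs: `x` (variable 0) marks `H` steps,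
`y` (variable 1) marks `U` steps. -/
noncomputable def BG : MvPowerSeries (Fin 2) ℚ :=
  fun d => (Nat.card {w : List Step //
    IsBargraph w ∧ w.count Step.H = d 0 ∧ w.count Step.U = d 1} : ℚ)

/-- Generating function of cornerless Motzkin paths. -/
noncomputable def MG : MvPowerSeries (Fin 2) ℚ :=
  fun d => (Nat.card {w : List Step //
    IsMotzkin w ∧ Cornerless w ∧ w.count Step.H = d 0 ∧ w.count Step.U = d 1} : ℚ)

/-- Generating function of bargraphs avoiding the factor `DH`. -/
noncomputable def BDH : MvPowerSeries (Fin 2) ℚ :=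
  fun d => (Nat.card {w : List Step //
    IsBargraph w ∧ ¬ [Step.D, Step.H] <:+: w ∧
      w.count Step.H = d 0 ∧ w.count Step.U = d 1} : ℚ)

/-- Generating function of bargraphs avoiding the factors `DH` and `HH`. -/
noncomputable def BDHHH : MvPowerSeries (Fin 2) ℚ :=
  fun d => (Nat.card {w : List Step //
    IsBargraph w ∧ ¬ [Step.D, Step.H] <:+: w ∧ ¬ [Step.H, Step.H] <:+: w ∧
      w.count Step.H = d 0 ∧ w.count Step.U = d 1} : ℚ)

/-- Generating function of cornerless Motzkin path prefixes ending at height `h`. -/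
noncomputable def Pgf (h : ℕ) : MvPowerSeries (Fin 2) ℚ :=
  fun d => (Nat.card {w : List Step //
    IsMotzkinPrefix w ∧ Cornerless w ∧ hgt w = (h : ℤ) ∧
      w.count Step.H = d 0 ∧ w.count Step.U = d 1} : ℚ)

/-- Decomposition `G = U^a G₁ H G₂ D^a` of a strictly alternating bargraph. -/
def SADecomp (t : ℕ × List Step × List Step) (G : List Step) : Prop :=
  1 ≤ t.1 ∧ IsStrictAlt t.2.1 ∧ IsStrictAlt (Step.U :: (t.2.2 ++ [Step.D])) ∧
    G = List.replicate t.1 Step.U ++ t.2.1 ++ [Step.H] ++ t.2.2 ++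
      List.replicate t.1 Step.D


/-!
Every maximal run of a letter `a` is entered either at the start of the word or after a
different letter, and left either at the end of the word or before a different letter.
A bargraph has no factor `UD` or `DU`, starts with `U` and ends with `D`: its runs of `U`
are entered through `HU` and the start and left only through `UH`, whence `#UH = #HU + 1`;
dually, runs of `D` are entered only through `HD` and left through `DH` and the end.
-/

lemma Step.eq_or_eq_or_eq {a b c : Step} (hab : a ≠ b) (hac : a ≠ c) (hbc : b ≠ c)
    (x : Step) : x = a ∨ x = b ∨ x = c := by
  cases a <;> cases b <;> cases c <;> cases x <;> simp_all

lemma cnt2_eq_zero_of_not_infix {a b : Step} :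
    ∀ {w : List Step}, ¬ [a, b] <:+: w → cnt2 a b w = 0
  | [], _ | [_], _ => rfl
  | x :: y :: r, h => by
    have hxy : ¬ (x = a ∧ y = b) := by
      rintro ⟨rfl, rfl⟩
      exact h ⟨[], r, rfl⟩
    have htail : ¬ [a, b] <:+: y :: r :=
      fun h' => h (h'.trans (List.suffix_cons x _).isInfix)
    simp only [cnt2, if_neg hxy, cnt2_eq_zero_of_not_infix htail]

lemma cnt2_exit_eq_cnt2_entry (a b c : Step) (hab : a ≠ b) (hac : a ≠ c) (hbc : b ≠ c) :
    ∀ w : List Step,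
      cnt2 a b w + cnt2 a c w + (if w.getLast? = some a then 1 else 0) =
        cnt2 b a w + cnt2 c a w + (if w.head? = some a then 1 else 0)
  | [] => by simp [cnt2]
  | [x] => by simp [cnt2]
  | x :: y :: r => by
    have ih := cnt2_exit_eq_cnt2_entry a b c hab hac hbc (y :: r)
    have hlast : (x :: y :: r).getLast? = (y :: r).getLast? := List.getLast?_cons_cons
    have cover := Step.eq_or_eq_or_eq hab hac hbc
    rw [hlast]
    rcases cover x with rfl | rfl | rfl <;> rcases cover y with rfl | rfl | rfl <;>
      simp [cnt2, hab, hac, hbc, hab.symm, hac.symm, hbc.symm] at ih ⊢ <;> omega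

lemma hgt_append (u v : List Step) : hgt (u ++ v) = hgt u + hgt v := by
  simp [hgt]

namespace IsBargraph

variable {w : List Step}

lemma head?_eq (hw : IsBargraph w) : w.head? = some Step.U := by
  obtain ⟨hlen, -, hpos, -⟩ := hw
  obtain _ | ⟨x, t⟩ := w
  · simp at hlen
  have hx := hpos [x] ⟨t, rfl⟩ (List.cons_ne_nil _ _) (by rintro ⟨⟩; simp at hlen)
  cases x <;> simp_all [hgt, Step.val]

lemma getLast?_eq (hw : IsBargraph w) : w.getLast? = some Step.D := by
  obtain ⟨hlen, hzero, hpos, -⟩ := hw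
  obtain rfl | ⟨v, l, rfl⟩ := List.eq_nil_or_concat w
  · simp at hlen
  rw [List.concat_eq_append] at hlen hzero hpos ⊢
  have hv := hpos v ⟨[l], rfl⟩ (by rintro rfl; simp at hlen) (by simp)
  have hl : hgt [l] < 0 := by rw [hgt_append] at hzero; omega
  cases l <;> simp_all [hgt, Step.val]

end IsBargraph

/-- in every bargraph, `#UH = #HU + 1` and `#HD = #DH + 1`. -/
theorem corner_relations (w : List Step) (hw : IsBargraph w) :
    cnt2 Step.U Step.H w = 1 + cnt2 Step.H Step.U w ∧
    cnt2 Step.H Step.D w = 1 + cnt2 Step.D Step.H w := by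
  have hUD := cnt2_eq_zero_of_not_infix hw.2.2.2.1
  have hDU := cnt2_eq_zero_of_not_infix hw.2.2.2.2
  have hU := cnt2_exit_eq_cnt2_entry Step.U Step.H Step.D (by decide) (by decide) (by decide) w
  have hD := cnt2_exit_eq_cnt2_entry Step.D Step.H Step.U (by decide) (by decide) (by decide) w
  simp only [hw.head?_eq, hw.getLast?_eq, hUD, hDU, Option.some.injEq, reduceCtorEq,
    if_true, if_false] at hU hD
  omega
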